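/- Let X be a nonempty finite set, N ≥ 1, and let q be a process on X^{N+2} with full support. Then among all Markov processes m on X^{N+2} with full-support transition probabilities and m(x_0) = q(x_0), the Markovian projection proj_M(q) is both the unique minimizer of KL(q || m) and the unique minimizer of Σ_{n=1}^{N+1} E_{q(x_{t_{n-1}})} KL( q(x_{t_n} | x_{t_{n-1}}) || m(x_{t_n} | x_{t_{n-1}}) ); in particular these two optimization problems have the same unique solution. -/

import Mathlib

open Finset

/-- A probability mass function on a finite type. -/
def IsPMF {Z : Type*} [Fintype Z] (p : Z → ℝ) : Prop :=
  (∀ z, 0 ≤ p z) ∧ ∑ z, p z = 1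

/-- KL divergence between two pmfs on a finite type (with `0 log 0 := 0`,
which is automatic since `0 * log (0/b) = 0`). -/
noncomputable def KLd {Z : Type*} [Fintype Z] (a b : Z → ℝ) : ℝ :=
  ∑ z, a z * Real.log (a z / b z)

/-- Trajectories with `N` intermediate time steps: indices `0, 1, …, N+1`,
where index `0` is time `0` and index `N+1` is time `1`. -/
abbrev Traj (X : Type*) (N : ℕ) := Fin (N + 2) → X

variable {X : Type*} [Fintype X] [DecidableEq X] {N : ℕ}

/-- One-time marginal of a process at time index `i`. -/
noncomputable def timeMarg (q : Traj X N → ℝ) (i : Fin (N + 2)) (x : X) : ℝ :=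
  ∑ ω : Traj X N, if ω i = x then q ω else 0

/-- Joint marginal of the endpoints `(x_0, x_1)`. -/
noncomputable def endMarg (q : Traj X N → ℝ) (a b : X) : ℝ :=
  ∑ ω : Traj X N, if ω 0 = a ∧ ω (Fin.last (N + 1)) = b then q ω else 0

/-- Joint marginal at the neighboring time indices `n` and `n+1`. -/
noncomputable def pairMarg (q : Traj X N → ℝ) (n : Fin (N + 1)) (y z : X) : ℝ :=
  ∑ ω : Traj X N, if ω n.castSucc = y ∧ ω n.succ = z then q ω else 0

/-- Transition probability `q(x_{t_n} = z | x_{t_{n-1}} = y)` for the step from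
time index `n` to `n+1`. -/
noncomputable def transP (q : Traj X N → ℝ) (n : Fin (N + 1)) (y z : X) : ℝ :=
  pairMarg q n y z / timeMarg q n.castSucc y

/-- Glue endpoints `a`, `b` and inner states `v` into a trajectory. -/
def glue (a : X) (v : Fin N → X) (b : X) : Traj X N :=
  Fin.cons a (Fin.snoc v b)

/-- The bridge `q(x_in | x_0 = a, x_1 = b)`, as a function of the inner states. -/
noncomputable def bridge (q : Traj X N → ℝ) (a b : X) (v : Fin N → X) : ℝ :=
  q (glue a v b) / endMarg q a b

/-- A process is Markov if it factorizes through its one-step transitions. -/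
def IsMarkov (q : Traj X N → ℝ) : Prop :=
  ∀ ω : Traj X N,
    q ω = timeMarg q 0 (ω 0) * ∏ n : Fin (N + 1), transP q n (ω n.castSucc) (ω n.succ)

/-- A process `q` is reciprocal w.r.t. a full-support reference process `qref` if its
bridges coincide with those of `qref` wherever they are defined. -/
def IsReciprocal (qref q : Traj X N → ℝ) : Prop :=
  ∀ a b : X, 0 < endMarg q a b → ∀ v : Fin N → X, bridge q a b v = bridge qref a b v

/-- Reciprocal projection of `q` w.r.t. `qref`:
`proj_R(q)(x_0, x_in, x_1) = qref(x_in | x_0, x_1) · q(x_0, x_1)`. -/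
noncomputable def projR (qref q : Traj X N → ℝ) (ω : Traj X N) : ℝ :=
  (qref ω / endMarg qref (ω 0) (ω (Fin.last (N + 1)))) *
    endMarg q (ω 0) (ω (Fin.last (N + 1)))

/-- Markovian projection of `q`:
`proj_M(q)(x_0, x_in, x_1) = q(x_0) ∏_{n=1}^{N+1} q(x_{t_n} | x_{t_{n-1}})`. -/
noncomputable def projM (q : Traj X N → ℝ) (ω : Traj X N) : ℝ :=
  timeMarg q 0 (ω 0) * ∏ n : Fin (N + 1), transP q n (ω n.castSucc) (ω n.succ)

/-- Marginal of the bridge of `q` at time index `i`: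
`q(x_{t_i} = y | x_0 = a, x_1 = b)`. -/
noncomputable def bridgeAt (q : Traj X N → ℝ) (i : Fin (N + 2)) (y a b : X) : ℝ :=
  (∑ ω : Traj X N, if ω 0 = a ∧ ω i = y ∧ ω (Fin.last (N + 1)) = b then q ω else 0) /
    endMarg q a b

/-- Conditional transition given the terminal point:
`q(x_{t_n} = z | x_{t_{n-1}} = y, x_1 = b)` for the step from time index `n` to `n+1`. -/
noncomputable def condTrans (q : Traj X N → ℝ) (n : Fin (N + 1)) (y z b : X) : ℝ :=
  (∑ ω : Traj X N,
      if ω n.castSucc = y ∧ ω n.succ = z ∧ ω (Fin.last (N + 1)) = b then q ω else 0) /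
    (∑ ω : Traj X N, if ω n.castSucc = y ∧ ω (Fin.last (N + 1)) = b then q ω else 0)

/-- Membership in `Π_N(p_0, p_1)`: a process with prescribed marginals at times 0 and 1. -/
def InPiN (p0 p1 : X → ℝ) (q : Traj X N → ℝ) : Prop :=
  IsPMF q ∧ (∀ x, timeMarg q 0 x = p0 x) ∧ (∀ x, timeMarg q (Fin.last (N + 1)) x = p1 x)

/-- Membership in `Π(p_0, p_1)`: couplings on `X²` with prescribed marginals. -/
def InPi2 (p0 p1 : X → ℝ) (s : X × X → ℝ) : Prop :=
  IsPMF s ∧ (∀ a, ∑ b, s (a, b) = p0 a) ∧ (∀ b, ∑ a, s (a, b) = p1 b)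

/-- Feasible class for the Markovian-projection optimization problems: Markov processes
`m` with full-support transition probabilities and the same initial marginal as `q`. -/
def MarkovFeasible {X : Type*} [Fintype X] [DecidableEq X] {N : ℕ}
    (q m : Traj X N → ℝ) : Prop :=
  IsPMF m ∧ IsMarkov m ∧ (∀ (n : Fin (N + 1)) (y z : X), 0 < transP m n y z) ∧
    (∀ x, timeMarg m 0 x = timeMarg q 0 x)

/-! For a Markov `m` with `m(x_0) = q(x_0)`, the log-ratio `log (proj_M(q) / m)` splits into the
one-step log-ratios of transitions, and its `q`-expectation is exactly the second objective.
This gives the Pythagorean identity `KL(q ‖ m) = KL(q ‖ proj_M(q)) + G(m)`. By Gibbs' inequality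
`G(m) ≥ 0`, with equality iff `m` has the transitions of `q`, i.e. iff `m = proj_M(q)`; and
`G(proj_M(q)) = 0` because the marginals of the chain `proj_M(q)` propagate exactly as those
of `q` do, so `proj_M(q)` has the transitions of `q`. -/

open InformationTheory

section KL

variable {Z : Type*} [Fintype Z] {a b : Z → ℝ}

lemma KLd_eq_sum_mul_klFun (hb : ∀ z, 0 < b z) (hab : ∑ z, a z = ∑ z, b z) :
    KLd a b = ∑ z, b z * klFun (a z / b z) := by
  have hterm : ∀ z, b z * klFun (a z / b z) = a z * Real.log (a z / b z) + b z - a z := by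
    intro z
    have hcancel : b z * (a z / b z) = a z := mul_div_cancel₀ _ (hb z).ne'
    rw [klFun_apply]
    linear_combination (Real.log (a z / b z) - 1) * hcancel
  simp only [hterm, sum_sub_distrib, sum_add_distrib, hab, KLd]
  ring

lemma KLd_nonneg (ha : ∀ z, 0 ≤ a z) (hb : ∀ z, 0 < b z) (hab : ∑ z, a z = ∑ z, b z) :
    0 ≤ KLd a b := by
  rw [KLd_eq_sum_mul_klFun hb hab]
  exact sum_nonneg fun z _ => mul_nonneg (hb z).le (klFun_nonneg (div_nonneg (ha z) (hb z).le))

lemma eq_of_KLd_eq_zero (ha : ∀ z, 0 ≤ a z) (hb : ∀ z, 0 < b z) (hab : ∑ z, a z = ∑ z, b z)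
    (h : KLd a b = 0) : a = b := by
  rw [KLd_eq_sum_mul_klFun hb hab, Fintype.sum_eq_zero_iff_of_nonneg fun z =>
    mul_nonneg (hb z).le (klFun_nonneg (div_nonneg (ha z) (hb z).le))] at h
  funext z
  have hkl := (mul_eq_zero.1 (congrFun h z)).resolve_left (hb z).ne'
  exact (div_eq_one_iff_eq (hb z).ne').1 ((klFun_eq_zero_iff (div_nonneg (ha z) (hb z).le)).1 hkl)

lemma KLd_self (a : Z → ℝ) : KLd a a = 0 :=
  sum_eq_zero fun z _ => by rcases eq_or_ne (a z) 0 with h | h <;> simp [h]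

end KL

section Marginals

variable {q : Traj X N → ℝ}

lemma timeMarg_pos (hq : ∀ ω, 0 < q ω) (i : Fin (N + 2)) (x : X) : 0 < timeMarg q i x :=
  sum_pos' (fun ω _ => by split <;> simp [(hq ω).le])
    ⟨fun _ => x, mem_univ _, by simp [hq]⟩

lemma pairMarg_pos (hq : ∀ ω, 0 < q ω) (n : Fin (N + 1)) (y z : X) : 0 < pairMarg q n y z := by
  have hne : n.succ ≠ n.castSucc := (Fin.castSucc_lt_succ (i := n)).ne'
  refine sum_pos' (fun ω _ => by split <;> simp [(hq ω).le])
    ⟨Function.update (fun _ => y) n.succ z, mem_univ _, ?_⟩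
  simp [Function.update_of_ne hne.symm, hq]

lemma sum_pairMarg_right (q : Traj X N → ℝ) (n : Fin (N + 1)) (y : X) :
    ∑ z, pairMarg q n y z = timeMarg q n.castSucc y := by
  unfold pairMarg timeMarg
  rw [sum_comm]
  exact sum_congr rfl fun ω _ => by by_cases h : ω n.castSucc = y <;> simp [h]

lemma sum_pairMarg_left (q : Traj X N → ℝ) (n : Fin (N + 1)) (z : X) :
    ∑ y, pairMarg q n y z = timeMarg q n.succ z := by
  unfold pairMarg timeMarg
  rw [sum_comm]
  exact sum_congr rfl fun ω _ => by by_cases h : ω n.succ = z <;> simp [h]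

lemma transP_pos (hq : ∀ ω, 0 < q ω) (n : Fin (N + 1)) (y z : X) : 0 < transP q n y z :=
  div_pos (pairMarg_pos hq n y z) (timeMarg_pos hq _ _)

lemma sum_transP (hq : ∀ ω, 0 < q ω) (n : Fin (N + 1)) (y : X) : ∑ z, transP q n y z = 1 := by
  unfold transP
  rw [← sum_div, sum_pairMarg_right, div_self (timeMarg_pos hq _ _).ne']

lemma timeMarg_mul_transP (hq : ∀ ω, 0 < q ω) (n : Fin (N + 1)) (y z : X) :
    timeMarg q n.castSucc y * transP q n y z = pairMarg q n y z :=
  mul_div_cancel₀ _ (timeMarg_pos hq _ _).ne'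

lemma timeMarg_succ (hq : ∀ ω, 0 < q ω) (n : Fin (N + 1)) (z : X) :
    timeMarg q n.succ z = ∑ y, timeMarg q n.castSucc y * transP q n y z := by
  simp only [timeMarg_mul_transP hq, sum_pairMarg_left]

lemma sum_mul_eq_sum_pairMarg (q : Traj X N → ℝ) (n : Fin (N + 1)) (f : X → X → ℝ) :
    ∑ ω, q ω * f (ω n.castSucc) (ω n.succ) = ∑ y, ∑ z, pairMarg q n y z * f y z := by
  have hsplit : ∀ ω : Traj X N, q ω * f (ω n.castSucc) (ω n.succ) =
      ∑ y, ∑ z, if ω n.castSucc = y ∧ ω n.succ = z then q ω * f y z else 0 := by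
    intro ω
    simp [ite_and]
  simp only [hsplit, pairMarg, sum_mul, ite_mul, zero_mul]
  rw [sum_comm]
  exact sum_congr rfl fun y _ => sum_comm

end Marginals

section Chain

variable {M : ℕ}

noncomputable def chainWeight (ν₀ : X → ℝ) (K : Fin M → X → X → ℝ) (p : Fin (M + 1) → X) : ℝ :=
  ν₀ (p 0) * ∏ n : Fin M, K n (p n.castSucc) (p n.succ)

omit [Fintype X] [DecidableEq X] in
lemma chainWeight_snoc (ν₀ : X → ℝ) (K : Fin (M + 1) → X → X → ℝ) (p : Fin (M + 1) → X)
    (z : X) :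
    chainWeight ν₀ K (Fin.snoc p z) =
      chainWeight ν₀ (fun n => K n.castSucc) p * K (Fin.last M) (p (Fin.last M)) z := by
  have h0 : (Fin.snoc p z : Fin (M + 2) → X) 0 = p 0 := Fin.snoc_castSucc (i := 0) ..
  simp only [chainWeight, Fin.prod_univ_castSucc, h0, Fin.succ_castSucc, Fin.snoc_castSucc,
    Fin.succ_last, Fin.snoc_last, mul_assoc]

omit [DecidableEq X] in
lemma sum_chainWeight_mul_eq_sum_snoc (ν₀ : X → ℝ) (K : Fin (M + 1) → X → X → ℝ)
    (F : (Fin (M + 2) → X) → ℝ) :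
    ∑ p, chainWeight ν₀ K p * F p =
      ∑ p, chainWeight ν₀ (fun n => K n.castSucc) p *
        ∑ z, K (Fin.last M) (p (Fin.last M)) z * F (Fin.snoc p z) := by
  rw [← (Fin.snocEquiv fun _ => X).sum_comp, Fintype.sum_prod_type, sum_comm]
  refine sum_congr rfl fun p _ => ?_
  rw [mul_sum]
  exact sum_congr rfl fun z _ => by rw [← mul_assoc, ← chainWeight_snoc]; rfl

omit [DecidableEq X] in
lemma sum_chainWeight_mul_init (ν₀ : X → ℝ) (K : Fin (M + 1) → X → X → ℝ)
    (hK : ∀ y, ∑ z, K (Fin.last M) y z = 1) (G : (Fin (M + 1) → X) → ℝ) :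
    ∑ p, chainWeight ν₀ K p * G (Fin.init p) =
      ∑ p, chainWeight ν₀ (fun n => K n.castSucc) p * G p := by
  simp only [sum_chainWeight_mul_eq_sum_snoc, Fin.init_snoc, ← sum_mul, hK, one_mul]

omit [DecidableEq X] in
lemma sum_chainWeight_mul_apply (K : Fin M → X → X → ℝ) (ν : Fin (M + 1) → X → ℝ)
    (hK : ∀ n y, ∑ z, K n y z = 1) (hν : ∀ n z, ν n.succ z = ∑ y, ν n.castSucc y * K n y z)
    (i : Fin (M + 1)) (F : X → ℝ) :
    ∑ p, chainWeight (ν 0) K p * F (p i) = ∑ c, ν i c * F c := by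
  induction M generalizing F with
  | zero =>
    rw [Fin.fin_one_eq_zero i, ← (Equiv.funUnique (Fin 1) X).symm.sum_comp]
    simp [chainWeight]
  | succ M ih =>
    have hν' : ∀ (n : Fin M) z,
        ν n.succ.castSucc z = ∑ y, ν n.castSucc.castSucc y * K n.castSucc y z :=
      fun n z => by rw [← Fin.succ_castSucc]; exact hν n.castSucc z
    have ih' := ih (fun n => K n.castSucc) (fun n => ν n.castSucc) (fun n => hK n.castSucc) hν'
    simp only [Fin.castSucc_zero] at ih'
    cases i using Fin.lastCases with
    | last =>
      simp only [sum_chainWeight_mul_eq_sum_snoc, Fin.snoc_last]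
      rw [ih' (Fin.last M) fun c => ∑ z, K (Fin.last M) c z * F z, ← Fin.succ_last]
      simp only [hν, mul_sum, sum_mul, mul_assoc]
      exact sum_comm
    | cast j =>
      exact (sum_chainWeight_mul_init _ K (hK _) fun p => F (p j)).trans (ih' j F)

omit [DecidableEq X] in
lemma sum_chainWeight_mul_apply_pair (K : Fin M → X → X → ℝ) (ν : Fin (M + 1) → X → ℝ)
    (hK : ∀ n y, ∑ z, K n y z = 1) (hν : ∀ n z, ν n.succ z = ∑ y, ν n.castSucc y * K n y z)
    (i : Fin M) (F : X → X → ℝ) :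
    ∑ p, chainWeight (ν 0) K p * F (p i.castSucc) (p i.succ) =
      ∑ y, ∑ z, ν i.castSucc y * K i y z * F y z := by
  induction M with
  | zero => exact i.elim0
  | succ M ih =>
    have hν' : ∀ (n : Fin M) z,
        ν n.succ.castSucc z = ∑ y, ν n.castSucc.castSucc y * K n.castSucc y z :=
      fun n z => by rw [← Fin.succ_castSucc]; exact hν n.castSucc z
    have hmarg := sum_chainWeight_mul_apply (fun n => K n.castSucc) (fun n => ν n.castSucc)
      (fun n => hK n.castSucc) hν'
    have ih' := ih (fun n => K n.castSucc) (fun n => ν n.castSucc) (fun n => hK n.castSucc) hν'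
    simp only [Fin.castSucc_zero] at hmarg ih'
    cases i using Fin.lastCases with
    | last =>
      simp only [sum_chainWeight_mul_eq_sum_snoc, Fin.snoc_last, Fin.succ_last,
        Fin.snoc_castSucc]
      rw [hmarg (Fin.last M) fun y => ∑ z, K (Fin.last M) y z * F y z]
      simp only [mul_sum, mul_assoc]
    | cast j =>
      simp only [Fin.succ_castSucc]
      exact (sum_chainWeight_mul_init _ K (hK _) fun p => F (p j.castSucc) (p j.succ)).trans
        (ih' j)

end Chain

section Projection

variable {q : Traj X N → ℝ}

lemma projM_eq_chainWeight (q : Traj X N → ℝ) :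
    projM q = chainWeight (timeMarg q 0) (transP q) :=
  rfl

lemma projM_pos (hq : ∀ ω, 0 < q ω) (ω : Traj X N) : 0 < projM q ω :=
  mul_pos (timeMarg_pos hq _ _) (prod_pos fun n _ => transP_pos hq n _ _)

lemma timeMarg_projM (hq : ∀ ω, 0 < q ω) (i : Fin (N + 2)) (x : X) :
    timeMarg (projM q) i x = timeMarg q i x := by
  have h := sum_chainWeight_mul_apply (transP q) (timeMarg q) (sum_transP hq)
    (timeMarg_succ hq) i fun c => if c = x then 1 else 0
  simp only [mul_ite, mul_one, mul_zero, sum_ite_eq'] at h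
  simp only [timeMarg, projM_eq_chainWeight, h, mem_univ, if_true]

lemma pairMarg_projM (hq : ∀ ω, 0 < q ω) (n : Fin (N + 1)) (y z : X) :
    pairMarg (projM q) n y z = pairMarg q n y z := by
  have h := sum_chainWeight_mul_apply_pair (transP q) (timeMarg q) (sum_transP hq)
    (timeMarg_succ hq) n fun c d => if c = y ∧ d = z then 1 else 0
  calc pairMarg (projM q) n y z
      = ∑ p, projM q p * if p n.castSucc = y ∧ p n.succ = z then 1 else 0 := by
        simp only [pairMarg, mul_ite, mul_one, mul_zero]
    _ = timeMarg q n.castSucc y * transP q n y z := by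
        rw [projM_eq_chainWeight, h]
        simp [ite_and]
    _ = pairMarg q n y z := timeMarg_mul_transP hq n y z

lemma transP_projM (hq : ∀ ω, 0 < q ω) (n : Fin (N + 1)) (y z : X) :
    transP (projM q) n y z = transP q n y z := by
  rw [transP, pairMarg_projM hq, timeMarg_projM hq, transP]

end Projection

section Objectives

variable {q m : Traj X N → ℝ}

noncomputable def transKL (q m : Traj X N → ℝ) : ℝ :=
  ∑ n : Fin (N + 1), ∑ y : X, timeMarg q n.castSucc y * KLd (transP q n y) (transP m n y)

lemma KLd_transP_nonneg (hq : ∀ ω, 0 < q ω) (hm : ∀ ω, 0 < m ω) (n : Fin (N + 1)) (y : X) :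
    0 ≤ KLd (transP q n y) (transP m n y) :=
  KLd_nonneg (fun z => (transP_pos hq n y z).le) (transP_pos hm n y)
    (by rw [sum_transP hq, sum_transP hm])

lemma timeMarg_mul_KLd_transP_nonneg (hq : ∀ ω, 0 < q ω) (hm : ∀ ω, 0 < m ω)
    (n : Fin (N + 1)) (y : X) :
    0 ≤ timeMarg q n.castSucc y * KLd (transP q n y) (transP m n y) :=
  mul_nonneg (timeMarg_pos hq _ _).le (KLd_transP_nonneg hq hm n y)

lemma transKL_nonneg (hq : ∀ ω, 0 < q ω) (hm : ∀ ω, 0 < m ω) : 0 ≤ transKL q m :=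
  sum_nonneg fun n _ => sum_nonneg fun y _ => timeMarg_mul_KLd_transP_nonneg hq hm n y

lemma transP_eq_of_transKL_eq_zero (hq : ∀ ω, 0 < q ω) (hm : ∀ ω, 0 < m ω)
    (h : transKL q m = 0) (n : Fin (N + 1)) (y : X) : transP m n y = transP q n y := by
  have hterm := timeMarg_mul_KLd_transP_nonneg hq hm
  rw [transKL, Fintype.sum_eq_zero_iff_of_nonneg fun n => sum_nonneg fun y _ => hterm n y] at h
  have hn := (Fintype.sum_eq_zero_iff_of_nonneg (hterm n)).1 (congrFun h n)
  have hKL := (mul_eq_zero.1 (congrFun hn y)).resolve_left (timeMarg_pos hq _ _).ne'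
  exact (eq_of_KLd_eq_zero (fun z => (transP_pos hq n y z).le) (transP_pos hm n y)
    (by rw [sum_transP hq, sum_transP hm]) hKL).symm

lemma transKL_projM_eq_zero (hq : ∀ ω, 0 < q ω) : transKL q (projM q) = 0 := by
  have htrans : ∀ n y, transP (projM q) n y = transP q n y :=
    fun n y => funext (transP_projM hq n y)
  simp only [transKL, htrans, KLd_self, mul_zero, sum_const_zero]

lemma transKL_eq_sum_pairMarg (hq : ∀ ω, 0 < q ω) (m : Traj X N → ℝ) :
    transKL q m = ∑ n : Fin (N + 1), ∑ y, ∑ z,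
      pairMarg q n y z * Real.log (transP q n y z / transP m n y z) := by
  simp only [transKL, KLd, mul_sum, ← mul_assoc, timeMarg_mul_transP hq]

lemma MarkovFeasible.apply_eq (hm : MarkovFeasible q m) (ω : Traj X N) :
    m ω = timeMarg q 0 (ω 0) * ∏ n : Fin (N + 1), transP m n (ω n.castSucc) (ω n.succ) := by
  rw [hm.2.1 ω, hm.2.2.2]

lemma MarkovFeasible.pos (hq : ∀ ω, 0 < q ω) (hm : MarkovFeasible q m) (ω : Traj X N) :
    0 < m ω := by
  rw [hm.apply_eq]
  exact mul_pos (timeMarg_pos hq _ _) (prod_pos fun n _ => hm.2.2.1 n _ _)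

lemma MarkovFeasible.eq_projM (hm : MarkovFeasible q m)
    (h : ∀ n y, transP m n y = transP q n y) : m = projM q :=
  funext fun ω => by rw [hm.apply_eq, projM]; simp only [h]

lemma MarkovFeasible.log_projM_div (hq : ∀ ω, 0 < q ω) (hm : MarkovFeasible q m)
    (ω : Traj X N) :
    Real.log (projM q ω / m ω) = ∑ n : Fin (N + 1),
      Real.log (transP q n (ω n.castSucc) (ω n.succ) / transP m n (ω n.castSucc) (ω n.succ)) := by
  rw [hm.apply_eq, projM, mul_div_mul_left _ _ (timeMarg_pos hq 0 _).ne', ← prod_div_distrib]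
  exact Real.log_prod fun n _ => (div_pos (transP_pos hq n _ _) (hm.2.2.1 n _ _)).ne'

lemma MarkovFeasible.KLd_eq_KLd_projM_add_transKL (hq : ∀ ω, 0 < q ω)
    (hm : MarkovFeasible q m) : KLd q m = KLd q (projM q) + transKL q m := by
  have hsplit : ∀ ω, q ω * Real.log (q ω / m ω) =
      q ω * Real.log (q ω / projM q ω) + q ω * Real.log (projM q ω / m ω) := by
    intro ω
    rw [← mul_add, ← Real.log_mul (div_pos (hq ω) (projM_pos hq ω)).ne'
      (div_pos (projM_pos hq ω) (hm.pos hq ω)).ne', div_mul_div_cancel₀ (projM_pos hq ω).ne']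
  calc KLd q m = KLd q (projM q) + ∑ ω, q ω * Real.log (projM q ω / m ω) := by
        simp only [KLd, hsplit, sum_add_distrib]
    _ = KLd q (projM q) + transKL q m := by
        simp only [hm.log_projM_div hq, mul_sum]
        rw [sum_comm, transKL_eq_sum_pairMarg hq]
        exact congrArg _ (sum_congr rfl fun n _ => sum_mul_eq_sum_pairMarg q n
          fun y z => Real.log (transP q n y z / transP m n y z))

end Objectives

theorem markov_proj_two_objectives_general
    {X : Type*} [Fintype X] [DecidableEq X] {N : ℕ}
    (q : Traj X N → ℝ) (hqpos : ∀ ω, 0 < q ω)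
    (G : (Traj X N → ℝ) → ℝ)
    (hG : ∀ m : Traj X N → ℝ, G m =
      ∑ n : Fin (N + 1), ∑ y : X, timeMarg q n.castSucc y *
        KLd (fun z : X => transP q n y z) (fun z : X => transP m n y z)) :
    ((∀ m : Traj X N → ℝ, MarkovFeasible q m → KLd q (projM q) ≤ KLd q m) ∧
     (∀ m : Traj X N → ℝ, MarkovFeasible q m → KLd q m = KLd q (projM q) → m = projM q)) ∧
    ((∀ m : Traj X N → ℝ, MarkovFeasible q m → G (projM q) ≤ G m) ∧
     (∀ m : Traj X N → ℝ, MarkovFeasible q m → G m = G (projM q) → m = projM q)) := by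
  have hG_eq : ∀ m, G m = transKL q m := hG
  have hG_projM : G (projM q) = 0 := (hG_eq _).trans (transKL_projM_eq_zero hqpos)
  have hnonneg : ∀ m, MarkovFeasible q m → 0 ≤ transKL q m :=
    fun m hm => transKL_nonneg hqpos (hm.pos hqpos)
  have huniq : ∀ m, MarkovFeasible q m → transKL q m = 0 → m = projM q :=
    fun m hm h => hm.eq_projM (transP_eq_of_transKL_eq_zero hqpos (hm.pos hqpos) h)
  refine ⟨⟨fun m hm => ?_, fun m hm h => ?_⟩, ⟨fun m hm => ?_, fun m hm h => ?_⟩⟩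
  · linarith [hm.KLd_eq_KLd_projM_add_transKL hqpos, hnonneg m hm]
  · exact huniq m hm (by linarith [hm.KLd_eq_KLd_projM_add_transKL hqpos])
  · rw [hG_projM, hG_eq]
    exact hnonneg m hm
  · rw [hG_projM, hG_eq] at h
    exact huniq m hm h

/-- Two equivalent objectives for the Markovian projection. Among Markov
processes `m` with full-support transitions and `m(x_0) = q(x_0)`, the Markovian projection
`proj_M(q)` is both the unique minimizer of `KL(q ‖ m)` and the unique minimizer of
`Σ_{n=1}^{N+1} E_{q(x_{t_{n-1}})} KL(q(x_{t_n}|x_{t_{n-1}}) ‖ m(x_{t_n}|x_{t_{n-1}}))`;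
in particular the two problems have the same unique solution. -/
theorem markov_proj_two_objectives
    {X : Type*} [Fintype X] [DecidableEq X] [Nonempty X] {N : ℕ} (hN : 1 ≤ N)
    (q : Traj X N → ℝ) (hq : IsPMF q) (hqpos : ∀ ω, 0 < q ω)
    (G : (Traj X N → ℝ) → ℝ)
    (hG : ∀ m : Traj X N → ℝ, G m =
      ∑ n : Fin (N + 1), ∑ y : X, timeMarg q n.castSucc y *
        KLd (fun z : X => transP q n y z) (fun z : X => transP m n y z)) :
    ((∀ m : Traj X N → ℝ, MarkovFeasible q m → KLd q (projM q) ≤ KLd q m) ∧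
     (∀ m : Traj X N → ℝ, MarkovFeasible q m → KLd q m = KLd q (projM q) → m = projM q)) ∧
    ((∀ m : Traj X N → ℝ, MarkovFeasible q m → G (projM q) ≤ G m) ∧
     (∀ m : Traj X N → ℝ, MarkovFeasible q m → G m = G (projM q) → m = projM q)) :=
  markov_proj_two_objectives_general q hqpos G hG
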